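/- Let (γ,f₁,f₂) be a pseudo-spherical spacelike framed immersion whose curvature has the form (α,ℓ̂,0,n̂), with ε̂ = ⟨f₁,f₁⟩, and assume α²(s)+ε̂n̂²(s) ≠ 0 and g(s) < 0 for all s ∈ I. Define η(s) = (α(s)γ(s) + ε̂n̂(s)f₂(s)) / √|α²(s)+ε̂n̂²(s)|, and let E_a(γ) denote the AdS-evolute (either sign choice). Then for all s: E_a(γ)(s) ∈ AdS³; ⟨μ(s),μ(s)⟩ = 1; ⟨η(s),η(s)⟩ = -sgn(α²(s)+ε̂n̂²(s)) ∈ {-1,1}; ⟨E_a(γ)(s),μ(s)⟩ = ⟨E_a(γ)(s),η(s)⟩ = ⟨μ(s),η(s)⟩ = 0; ⟨E_a(γ)'(s),μ(s)⟩ = ⟨E_a(γ)'(s),η(s)⟩ = 0 (so (E_a(γ),μ,η) is a pseudo-spherical framed curve); ⟨μ'(s),η(s)⟩ = -(α²(s)+ε̂n̂²(s))/√|α²(s)+ε̂n̂²(s)|; and the map s ↦ (E_a(γ)(s),μ(s),η(s)) has nowhere-vanishing derivative (it is an immersion). -/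

import Mathlib

noncomputable section

/-- The index-2 pseudo-scalar product on `ℝ⁴₂`. -/
def pdot (u w : Fin 4 → ℝ) : ℝ :=
  -(u 0 * w 0) - u 1 * w 1 + u 2 * w 2 + u 3 * w 3

/-- 3×3 determinant. -/
def det3 (a b c d e f g h i : ℝ) : ℝ :=
  a * (e * i - f * h) - b * (d * i - f * g) + c * (d * h - e * g)

/-- The triple product `u×v×w` in `ℝ⁴₂`. -/
def tripleProd (u v w : Fin 4 → ℝ) : Fin 4 → ℝ :=
  ![ -det3 (u 1) (u 2) (u 3) (v 1) (v 2) (v 3) (w 1) (w 2) (w 3),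
      det3 (u 0) (u 2) (u 3) (v 0) (v 2) (v 3) (w 0) (w 2) (w 3),
      det3 (u 0) (u 1) (u 3) (v 0) (v 1) (v 3) (w 0) (w 1) (w 3),
     -det3 (u 0) (u 1) (u 2) (v 0) (v 1) (v 2) (w 0) (w 1) (w 2)]

/-- `μ(s) = γ(s)×v₁(s)×v₂(s)`. -/
def muOf (γ v₁ v₂ : ℝ → Fin 4 → ℝ) (s : ℝ) : Fin 4 → ℝ :=
  tripleProd (γ s) (v₁ s) (v₂ s)

/-- Pseudo-spherical spacelike framed curve on the open interval `I`. -/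
structure SpacelikeFramed (I : Set ℝ) (γ v₁ v₂ : ℝ → Fin 4 → ℝ) (ε : ℝ) : Prop where
  smooth_γ : ContDiffOn ℝ (⊤ : ℕ∞) γ I
  smooth_v₁ : ContDiffOn ℝ (⊤ : ℕ∞) v₁ I
  smooth_v₂ : ContDiffOn ℝ (⊤ : ℕ∞) v₂ I
  eps : ε = 1 ∨ ε = -1
  ads : ∀ s ∈ I, pdot (γ s) (γ s) = -1
  normv₁ : ∀ s ∈ I, pdot (v₁ s) (v₁ s) = ε
  normv₂ : ∀ s ∈ I, pdot (v₂ s) (v₂ s) = -ε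
  orth₁ : ∀ s ∈ I, pdot (γ s) (v₁ s) = 0
  orth₂ : ∀ s ∈ I, pdot (γ s) (v₂ s) = 0
  orth₃ : ∀ s ∈ I, pdot (v₁ s) (v₂ s) = 0
  tangent₁ : ∀ s ∈ I, pdot (deriv γ s) (v₁ s) = 0
  tangent₂ : ∀ s ∈ I, pdot (deriv γ s) (v₂ s) = 0

def scurvA (γ v₁ v₂ : ℝ → Fin 4 → ℝ) (s : ℝ) : ℝ := pdot (deriv γ s) (muOf γ v₁ v₂ s)
def scurvL (ε : ℝ) (v₁ v₂ : ℝ → Fin 4 → ℝ) (s : ℝ) : ℝ := -ε * pdot (deriv v₁ s) (v₂ s)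
def scurvM (γ v₁ v₂ : ℝ → Fin 4 → ℝ) (s : ℝ) : ℝ := pdot (deriv v₁ s) (muOf γ v₁ v₂ s)
def scurvN (γ v₁ v₂ : ℝ → Fin 4 → ℝ) (s : ℝ) : ℝ := pdot (deriv v₂ s) (muOf γ v₁ v₂ s)

/-- Pseudo-spherical timelike framed curve on the open interval `I`. -/
structure TimelikeFramed (I : Set ℝ) (γ v₁ v₂ : ℝ → Fin 4 → ℝ) : Prop where
  smooth_γ : ContDiffOn ℝ (⊤ : ℕ∞) γ I
  smooth_v₁ : ContDiffOn ℝ (⊤ : ℕ∞) v₁ I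
  smooth_v₂ : ContDiffOn ℝ (⊤ : ℕ∞) v₂ I
  ads : ∀ s ∈ I, pdot (γ s) (γ s) = -1
  normv₁ : ∀ s ∈ I, pdot (v₁ s) (v₁ s) = 1
  normv₂ : ∀ s ∈ I, pdot (v₂ s) (v₂ s) = 1
  orth₁ : ∀ s ∈ I, pdot (γ s) (v₁ s) = 0
  orth₂ : ∀ s ∈ I, pdot (γ s) (v₂ s) = 0
  orth₃ : ∀ s ∈ I, pdot (v₁ s) (v₂ s) = 0
  tangent₁ : ∀ s ∈ I, pdot (deriv γ s) (v₁ s) = 0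
  tangent₂ : ∀ s ∈ I, pdot (deriv γ s) (v₂ s) = 0

def tcurvA (γ v₁ v₂ : ℝ → Fin 4 → ℝ) (s : ℝ) : ℝ := -pdot (deriv γ s) (muOf γ v₁ v₂ s)
def tcurvL (v₁ v₂ : ℝ → Fin 4 → ℝ) (s : ℝ) : ℝ := pdot (deriv v₁ s) (v₂ s)
def tcurvM (γ v₁ v₂ : ℝ → Fin 4 → ℝ) (s : ℝ) : ℝ := -pdot (deriv v₁ s) (muOf γ v₁ v₂ s)
def tcurvN (γ v₁ v₂ : ℝ → Fin 4 → ℝ) (s : ℝ) : ℝ := -pdot (deriv v₂ s) (muOf γ v₁ v₂ s)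

/-- `g(s)` for the spacelike total evolute. -/
def sG (α ℓh nh : ℝ → ℝ) (εh : ℝ) (s : ℝ) : ℝ :=
  εh * (α s * deriv nh s - nh s * deriv α s) ^ 2
    - (ℓh s) ^ 2 * (nh s) ^ 2 * ((nh s) ^ 2 + εh * (α s) ^ 2)

/-- Total evolute (with the `+` sign) of a spacelike framed immersion with curvature
`(α, ℓ̂, 0, n̂)`. -/
def sEvolute (γ f₁ f₂ : ℝ → Fin 4 → ℝ) (α ℓh nh : ℝ → ℝ) (εh : ℝ) (s : ℝ) : Fin 4 → ℝ :=
  (Real.sqrt |sG α ℓh nh εh s|)⁻¹ •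
    ((ℓh s * nh s) • (nh s • γ s - α s • f₂ s)
      - (α s * deriv nh s - nh s * deriv α s) • f₁ s)

/-- `f(s)` for the timelike total evolute. -/
def tF (α ℓh nh : ℝ → ℝ) (s : ℝ) : ℝ :=
  (α s * deriv nh s - nh s * deriv α s) ^ 2
    - (ℓh s) ^ 2 * (nh s) ^ 2 * ((nh s) ^ 2 - (α s) ^ 2)

/-- Total evolute (with the `+` sign) of a timelike framed immersion with curvature
`(α, ℓ̂, 0, n̂)`. -/
def tEvolute (γ f₁ f₂ : ℝ → Fin 4 → ℝ) (α ℓh nh : ℝ → ℝ) (s : ℝ) : Fin 4 → ℝ :=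
  (Real.sqrt |tF α ℓh nh s|)⁻¹ •
    ((ℓh s * nh s) • (nh s • γ s - α s • f₂ s)
      - (α s * deriv nh s - nh s * deriv α s) • f₁ s)

open Topology Filter

/-! ### Auxiliary lemmas -/

lemma pdot_triple_left' (u v w : Fin 4 → ℝ) : pdot (tripleProd u v w) u = 0 := by
  simp [pdot, tripleProd, det3]; ring
lemma pdot_triple_mid' (u v w : Fin 4 → ℝ) : pdot (tripleProd u v w) v = 0 := by
  simp [pdot, tripleProd, det3]; ring
lemma pdot_triple_right' (u v w : Fin 4 → ℝ) : pdot (tripleProd u v w) w = 0 := by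
  simp [pdot, tripleProd, det3]; ring
lemma pdot_triple_self' (u v w : Fin 4 → ℝ) :
    pdot (tripleProd u v w) (tripleProd u v w) =
      det3 (pdot u u) (pdot u v) (pdot u w) (pdot u v) (pdot v v) (pdot v w)
        (pdot u w) (pdot v w) (pdot w w) := by
  simp [pdot, tripleProd, det3]; ring

lemma pdot_comm' (u w : Fin 4 → ℝ) : pdot u w = pdot w u := by unfold pdot; ring
lemma pdot_smul_left' (c : ℝ) (u w : Fin 4 → ℝ) : pdot (c • u) w = c * pdot u w := by
  simp only [pdot, Pi.smul_apply, smul_eq_mul]; ring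
lemma pdot_smul_right' (c : ℝ) (u w : Fin 4 → ℝ) : pdot u (c • w) = c * pdot u w := by
  simp only [pdot, Pi.smul_apply, smul_eq_mul]; ring
lemma pdot_add_left' (u v w : Fin 4 → ℝ) : pdot (u + v) w = pdot u w + pdot v w := by
  simp only [pdot, Pi.add_apply]; ring
lemma pdot_add_right' (u v w : Fin 4 → ℝ) : pdot u (v + w) = pdot u v + pdot u w := by
  simp only [pdot, Pi.add_apply]; ring
lemma pdot_sub_left' (u v w : Fin 4 → ℝ) : pdot (u - v) w = pdot u w - pdot v w := by
  simp only [pdot, Pi.sub_apply]; ring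
lemma pdot_sub_right' (u v w : Fin 4 → ℝ) : pdot u (v - w) = pdot u v - pdot u w := by
  simp only [pdot, Pi.sub_apply]; ring
lemma pdot_zero_left' (w : Fin 4 → ℝ) : pdot 0 w = 0 := by simp [pdot]

lemma hasDerivAt_pdot {p q : ℝ → Fin 4 → ℝ} {p' q' : Fin 4 → ℝ} {s : ℝ}
    (hp : HasDerivAt p p' s) (hq : HasDerivAt q q' s) :
    HasDerivAt (fun t => pdot (p t) (q t)) (pdot p' (q s) + pdot (p s) q') s := by
  have hpi := hasDerivAt_pi.mp hp
  have hqi := hasDerivAt_pi.mp hq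
  unfold pdot
  refine HasDerivAt.congr_deriv ((((((hpi 0).mul (hqi 0)).neg).sub ((hpi 1).mul (hqi 1))).add
      ((hpi 2).mul (hqi 2))).add ((hpi 3).mul (hqi 3))) ?_
  ring

lemma contDiffOn_pdot {p q : ℝ → Fin 4 → ℝ} {I : Set ℝ}
    (hp : ContDiffOn ℝ (⊤ : ℕ∞) p I) (hq : ContDiffOn ℝ (⊤ : ℕ∞) q I) :
    ContDiffOn ℝ (⊤ : ℕ∞) (fun t => pdot (p t) (q t)) I := by
  have hpi : ∀ i, ContDiffOn ℝ (⊤ : ℕ∞) (fun t => p t i) I := fun i => contDiffOn_pi.mp hp i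
  have hqi : ∀ i, ContDiffOn ℝ (⊤ : ℕ∞) (fun t => q t i) I := fun i => contDiffOn_pi.mp hq i
  unfold pdot
  exact (((((hpi 0).mul (hqi 0)).neg).sub ((hpi 1).mul (hqi 1))).add
      ((hpi 2).mul (hqi 2))).add ((hpi 3).mul (hqi 3))

lemma contDiffOn_muOf {γ f₁ f₂ : ℝ → Fin 4 → ℝ} {I : Set ℝ}
    (h1 : ContDiffOn ℝ (⊤ : ℕ∞) γ I) (h2 : ContDiffOn ℝ (⊤ : ℕ∞) f₁ I) (h3 : ContDiffOn ℝ (⊤ : ℕ∞) f₂ I) :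
    ContDiffOn ℝ (⊤ : ℕ∞) (muOf γ f₁ f₂) I := by
  have hpi : ∀ i, ContDiffOn ℝ (⊤ : ℕ∞) (fun t => γ t i) I := fun i => contDiffOn_pi.mp h1 i
  have hqi : ∀ i, ContDiffOn ℝ (⊤ : ℕ∞) (fun t => f₁ t i) I := fun i => contDiffOn_pi.mp h2 i
  have hri : ∀ i, ContDiffOn ℝ (⊤ : ℕ∞) (fun t => f₂ t i) I := fun i => contDiffOn_pi.mp h3 i
  rw [contDiffOn_pi]
  intro i
  fin_cases i <;>
    simp only [muOf, tripleProd, det3, Matrix.cons_val_zero, Matrix.cons_val_one,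
      Matrix.head_cons, Matrix.cons_val_two, Matrix.tail_cons, Matrix.cons_val_three,
      Fin.isValue] <;>
  · apply_rules [ContDiffOn.add, ContDiffOn.sub, ContDiffOn.mul, ContDiffOn.neg, hpi, hqi, hri]
theorem spacelike_ads_evolute_is_framed_immersion
    (I : Set ℝ) (hI : IsOpen I) (hIc : I.OrdConnected)
    (γ f₁ f₂ : ℝ → Fin 4 → ℝ) (εh : ℝ)
    (hfr : SpacelikeFramed I γ f₁ f₂ εh)
    (α ℓh nh : ℝ → ℝ)
    (hA : ∀ s ∈ I, α s = scurvA γ f₁ f₂ s)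
    (hL : ∀ s ∈ I, ℓh s = scurvL εh f₁ f₂ s)
    (hM0 : ∀ s ∈ I, scurvM γ f₁ f₂ s = 0)
    (hN : ∀ s ∈ I, nh s = scurvN γ f₁ f₂ s)
    (himm : ∀ s ∈ I, ¬(α s = 0 ∧ ℓh s = 0 ∧ nh s = 0))
    (hnd : ∀ s ∈ I, (α s) ^ 2 + εh * (nh s) ^ 2 ≠ 0)
    (hg : ∀ s ∈ I, sG α ℓh nh εh s < 0)
    (η : ℝ → Fin 4 → ℝ)
    (hη : ∀ s, η s = (Real.sqrt |(α s) ^ 2 + εh * (nh s) ^ 2|)⁻¹ •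
      (α s • γ s + (εh * nh s) • f₂ s)) :
    ∀ s ∈ I,
      pdot (sEvolute γ f₁ f₂ α ℓh nh εh s) (sEvolute γ f₁ f₂ α ℓh nh εh s) = -1 ∧
      pdot (muOf γ f₁ f₂ s) (muOf γ f₁ f₂ s) = 1 ∧
      pdot (η s) (η s) = -Real.sign ((α s) ^ 2 + εh * (nh s) ^ 2) ∧
      pdot (sEvolute γ f₁ f₂ α ℓh nh εh s) (muOf γ f₁ f₂ s) = 0 ∧
      pdot (sEvolute γ f₁ f₂ α ℓh nh εh s) (η s) = 0 ∧
      pdot (muOf γ f₁ f₂ s) (η s) = 0 ∧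
      pdot (deriv (sEvolute γ f₁ f₂ α ℓh nh εh) s) (muOf γ f₁ f₂ s) = 0 ∧
      pdot (deriv (sEvolute γ f₁ f₂ α ℓh nh εh) s) (η s) = 0 ∧
      pdot (deriv (muOf γ f₁ f₂) s) (η s)
        = -((α s) ^ 2 + εh * (nh s) ^ 2) / Real.sqrt |(α s) ^ 2 + εh * (nh s) ^ 2| ∧
      ¬(deriv (sEvolute γ f₁ f₂ α ℓh nh εh) s = 0 ∧
        deriv (muOf γ f₁ f₂) s = 0 ∧ deriv η s = 0) := by
  intro s hs
  have hsn : I ∈ 𝓝 s := hI.mem_nhds hs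
  have he2 : εh * εh = 1 := by rcases hfr.eps with h | h <;> rw [h] <;> norm_num
  -- smooth families
  have hμS : ContDiffOn ℝ (⊤ : ℕ∞) (muOf γ f₁ f₂) I :=
    contDiffOn_muOf hfr.smooth_γ hfr.smooth_v₁ hfr.smooth_v₂
  have hdγS : ContDiffOn ℝ (⊤ : ℕ∞) (deriv γ) I := hfr.smooth_γ.deriv_of_isOpen hI (by simp)
  have hdf₁S : ContDiffOn ℝ (⊤ : ℕ∞) (deriv f₁) I := hfr.smooth_v₁.deriv_of_isOpen hI (by simp)
  have hdf₂S : ContDiffOn ℝ (⊤ : ℕ∞) (deriv f₂) I := hfr.smooth_v₂.deriv_of_isOpen hI (by simp)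
  have hAfS : ContDiffOn ℝ (⊤ : ℕ∞) (fun t => pdot (deriv γ t) (muOf γ f₁ f₂ t)) I :=
    contDiffOn_pdot hdγS hμS
  have hLfS : ContDiffOn ℝ (⊤ : ℕ∞) (fun t => -εh * pdot (deriv f₁ t) (f₂ t)) I :=
    contDiffOn_const.mul (contDiffOn_pdot hdf₁S hfr.smooth_v₂)
  have hNfS : ContDiffOn ℝ (⊤ : ℕ∞) (fun t => pdot (deriv f₂ t) (muOf γ f₁ f₂ t)) I :=
    contDiffOn_pdot hdf₂S hμS
  -- eventual equalities for the curvature functions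
  have hαe : α =ᶠ[𝓝 s] (fun t => pdot (deriv γ t) (muOf γ f₁ f₂ t)) := by
    filter_upwards [hsn] with t ht
    simpa [scurvA] using hA t ht
  have hℓe : ℓh =ᶠ[𝓝 s] (fun t => -εh * pdot (deriv f₁ t) (f₂ t)) := by
    filter_upwards [hsn] with t ht
    simpa [scurvL] using hL t ht
  have hne : nh =ᶠ[𝓝 s] (fun t => pdot (deriv f₂ t) (muOf γ f₁ f₂ t)) := by
    filter_upwards [hsn] with t ht
    simpa [scurvN] using hN t ht
  -- differentiability at s
  have hγd : DifferentiableAt ℝ γ s := (hfr.smooth_γ.contDiffAt hsn).differentiableAt (by simp)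
  have hf₁d : DifferentiableAt ℝ f₁ s := (hfr.smooth_v₁.contDiffAt hsn).differentiableAt (by simp)
  have hf₂d : DifferentiableAt ℝ f₂ s := (hfr.smooth_v₂.contDiffAt hsn).differentiableAt (by simp)
  have hμd : DifferentiableAt ℝ (muOf γ f₁ f₂) s := (hμS.contDiffAt hsn).differentiableAt (by simp)
  have hdγ : HasDerivAt γ (deriv γ s) s := hγd.hasDerivAt
  have hdf₁ : HasDerivAt f₁ (deriv f₁ s) s := hf₁d.hasDerivAt
  have hdf₂ : HasDerivAt f₂ (deriv f₂ s) s := hf₂d.hasDerivAt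
  have hdμ : HasDerivAt (muOf γ f₁ f₂) (deriv (muOf γ f₁ f₂) s) s := hμd.hasDerivAt
  have hαA : DifferentiableAt ℝ α s :=
    (hαe.differentiableAt_iff).mpr ((hAfS.contDiffAt hsn).differentiableAt (by simp))
  have hℓA : DifferentiableAt ℝ ℓh s :=
    (hℓe.differentiableAt_iff).mpr ((hLfS.contDiffAt hsn).differentiableAt (by simp))
  have hnA : DifferentiableAt ℝ nh s :=
    (hne.differentiableAt_iff).mpr ((hNfS.contDiffAt hsn).differentiableAt (by simp))
  have hα : HasDerivAt α (deriv α s) s := hαA.hasDerivAt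
  have hℓ : HasDerivAt ℓh (deriv ℓh s) s := hℓA.hasDerivAt
  have hn : HasDerivAt nh (deriv nh s) s := hnA.hasDerivAt
  have hdαA : DifferentiableAt ℝ (deriv α) s :=
    (hαe.deriv.differentiableAt_iff).mpr
      (((hAfS.deriv_of_isOpen (m := (⊤ : ℕ∞)) hI (by simp)).contDiffAt hsn).differentiableAt (by simp))
  have hdnA : DifferentiableAt ℝ (deriv nh) s :=
    (hne.deriv.differentiableAt_iff).mpr
      (((hNfS.deriv_of_isOpen (m := (⊤ : ℕ∞)) hI (by simp)).contDiffAt hsn).differentiableAt (by simp))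
  -- the key differentiation principle for pairings
  have key : ∀ {p q : ℝ → Fin 4 → ℝ} {p' q' : Fin 4 → ℝ} {F : ℝ → ℝ} {d : ℝ},
      HasDerivAt p p' s → HasDerivAt q q' s → HasDerivAt F d s →
      (∀ t ∈ I, pdot (p t) (q t) = F t) → pdot p' (q s) + pdot (p s) q' = d := by
    intro p q p' q' F d hp hq hF heq
    refine (hasDerivAt_pdot hp hq).unique (hF.congr_of_eventuallyEq ?_)
    filter_upwards [hsn] with t ht using heq t ht
  -- Gram values at s
  have c1 : pdot (γ s) (γ s) = -1 := hfr.ads s hs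
  have c2 : pdot (f₁ s) (f₁ s) = εh := hfr.normv₁ s hs
  have c3 : pdot (f₂ s) (f₂ s) = -εh := hfr.normv₂ s hs
  have c4 : pdot (γ s) (f₁ s) = 0 := hfr.orth₁ s hs
  have c4' : pdot (f₁ s) (γ s) = 0 := by rw [pdot_comm']; exact c4
  have c5 : pdot (γ s) (f₂ s) = 0 := hfr.orth₂ s hs
  have c5' : pdot (f₂ s) (γ s) = 0 := by rw [pdot_comm']; exact c5
  have c6 : pdot (f₁ s) (f₂ s) = 0 := hfr.orth₃ s hs
  have c6' : pdot (f₂ s) (f₁ s) = 0 := by rw [pdot_comm']; exact c6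
  have t1 : pdot (deriv γ s) (f₁ s) = 0 := hfr.tangent₁ s hs
  have t1' : pdot (f₁ s) (deriv γ s) = 0 := by rw [pdot_comm']; exact t1
  have t2 : pdot (deriv γ s) (f₂ s) = 0 := hfr.tangent₂ s hs
  have t2' : pdot (f₂ s) (deriv γ s) = 0 := by rw [pdot_comm']; exact t2
  have c7 : pdot (muOf γ f₁ f₂ s) (γ s) = 0 := by
    simp only [muOf]; exact pdot_triple_left' _ _ _
  have c8 : pdot (muOf γ f₁ f₂ s) (f₁ s) = 0 := by
    simp only [muOf]; exact pdot_triple_mid' _ _ _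
  have c9 : pdot (muOf γ f₁ f₂ s) (f₂ s) = 0 := by
    simp only [muOf]; exact pdot_triple_right' _ _ _
  -- curvature values at s
  have hαs : α s = pdot (deriv γ s) (muOf γ f₁ f₂ s) := by simpa [scurvA] using hA s hs
  have hℓs : ℓh s = -εh * pdot (deriv f₁ s) (f₂ s) := by simpa [scurvL] using hL s hs
  have hns : nh s = pdot (deriv f₂ s) (muOf γ f₁ f₂ s) := by simpa [scurvN] using hN s hs
  have hMs : pdot (deriv f₁ s) (muOf γ f₁ f₂ s) = 0 := by simpa [scurvM] using hM0 s hs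
  have hP : pdot (deriv f₁ s) (f₂ s) = -εh * ℓh s := by
    linear_combination εh * hℓs - pdot (deriv f₁ s) (f₂ s) * he2
  -- derivative pairing facts
  have k1 := key hdγ hdγ (hasDerivAt_const s (-1 : ℝ)) hfr.ads
  have d1 : pdot (γ s) (deriv γ s) = 0 := by
    rw [pdot_comm' (deriv γ s) (γ s)] at k1; linarith
  have k2 := key hdf₂ hdf₂ (hasDerivAt_const s (-εh)) hfr.normv₂
  have d2 : pdot (f₂ s) (deriv f₂ s) = 0 := by
    rw [pdot_comm' (deriv f₂ s) (f₂ s)] at k2; linarith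
  have k3 := key hdγ hdf₂ (hasDerivAt_const s (0 : ℝ)) hfr.orth₂
  have d3 : pdot (γ s) (deriv f₂ s) = 0 := by
    rw [t2] at k3; linarith
  have k4 := key hdf₁ hdf₂ (hasDerivAt_const s (0 : ℝ)) hfr.orth₃
  have d4 : pdot (f₁ s) (deriv f₂ s) = εh * ℓh s := by
    rw [hP] at k4; linarith
  have horthμγ : ∀ t ∈ I, pdot (γ t) (muOf γ f₁ f₂ t) = (fun _ => (0:ℝ)) t := by
    intro t ht; rw [pdot_comm']; simp only [muOf]; exact pdot_triple_left' _ _ _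
  have horthμf₁ : ∀ t ∈ I, pdot (f₁ t) (muOf γ f₁ f₂ t) = (fun _ => (0:ℝ)) t := by
    intro t ht; rw [pdot_comm']; simp only [muOf]; exact pdot_triple_mid' _ _ _
  have horthμf₂ : ∀ t ∈ I, pdot (f₂ t) (muOf γ f₁ f₂ t) = (fun _ => (0:ℝ)) t := by
    intro t ht; rw [pdot_comm']; simp only [muOf]; exact pdot_triple_right' _ _ _
  have k5 := key hdγ hdμ (hasDerivAt_const s (0 : ℝ)) horthμγ
  have d5 : pdot (γ s) (deriv (muOf γ f₁ f₂) s) = -α s := by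
    rw [← hαs] at k5; linarith
  have k6 := key hdf₁ hdμ (hasDerivAt_const s (0 : ℝ)) horthμf₁
  have d6 : pdot (f₁ s) (deriv (muOf γ f₁ f₂) s) = 0 := by
    rw [hMs] at k6; linarith
  have k7 := key hdf₂ hdμ (hasDerivAt_const s (0 : ℝ)) horthμf₂
  have d7 : pdot (f₂ s) (deriv (muOf γ f₁ f₂) s) = -nh s := by
    rw [← hns] at k7; linarith
  -- the unnormalized evolute direction and the normalizing factor
  set uf : ℝ → Fin 4 → ℝ := fun t =>
      (ℓh t * nh t) • (nh t • γ t - α t • f₂ t)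
        - (α t * deriv nh t - nh t * deriv α t) • f₁ t with huf_def
  set rf : ℝ → ℝ := fun t => (Real.sqrt |sG α ℓh nh εh t|)⁻¹ with hrf_def
  have hufd : DifferentiableAt ℝ uf s := by
    rw [huf_def]
    exact (((hℓA.mul hnA).smul ((hnA.smul hγd).sub (hαA.smul hf₂d)))).sub
      (((hαA.mul hdnA).sub (hnA.mul hdαA)).smul hf₁d)
  have hu : HasDerivAt uf (deriv uf s) s := hufd.hasDerivAt
  -- pointwise pairings of uf on I
  have hu_μI : ∀ t ∈ I, pdot (uf t) (muOf γ f₁ f₂ t) = (fun _ => (0:ℝ)) t := by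
    intro t ht
    have h1 := horthμγ t ht
    have h2 := horthμf₁ t ht
    have h3 := horthμf₂ t ht
    simp only [huf_def, pdot_sub_left', pdot_smul_left'] at *
    rw [h1, h2, h3]; ring
  have hu_γI : ∀ t ∈ I, pdot (uf t) (γ t) = (fun t => -(ℓh t * nh t * nh t)) t := by
    intro t ht
    have h1 := hfr.ads t ht
    have h2 : pdot (f₁ t) (γ t) = 0 := by rw [pdot_comm']; exact hfr.orth₁ t ht
    have h3 : pdot (f₂ t) (γ t) = 0 := by rw [pdot_comm']; exact hfr.orth₂ t ht
    simp only [huf_def, pdot_sub_left', pdot_smul_left']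
    rw [h1, h2, h3]; ring
  have hu_f₂I : ∀ t ∈ I, pdot (uf t) (f₂ t) = (fun t => εh * (ℓh t * nh t * α t)) t := by
    intro t ht
    have h1 := hfr.normv₂ t ht
    have h2 := hfr.orth₂ t ht
    have h3 := hfr.orth₃ t ht
    simp only [huf_def, pdot_sub_left', pdot_smul_left']
    rw [h1, h2, h3]; ring
  -- derivative pairings for uf
  have k8 := key hu hdμ (hasDerivAt_const s (0 : ℝ)) hu_μI
  have x1 : pdot (uf s) (deriv (muOf γ f₁ f₂) s) = 0 := by
    simp only [huf_def, pdot_sub_left', pdot_smul_left']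
    rw [d5, d6, d7]; ring
  have e1 : pdot (deriv uf s) (muOf γ f₁ f₂ s) = 0 := by linear_combination k8 - x1
  have hB : HasDerivAt (fun t => -(ℓh t * nh t * nh t))
      (-((deriv ℓh s * nh s + ℓh s * deriv nh s) * nh s + ℓh s * nh s * deriv nh s)) s :=
    ((hℓ.mul hn).mul hn).neg
  have k9 := key hu hdγ hB hu_γI
  have y2 : pdot (uf s) (deriv γ s) = 0 := by
    simp only [huf_def, pdot_sub_left', pdot_smul_left']
    rw [d1, t1', t2']; ring
  have e2 : pdot (deriv uf s) (γ s)
      = -((deriv ℓh s * nh s + ℓh s * deriv nh s) * nh s + ℓh s * nh s * deriv nh s) := by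
    linear_combination k9 - y2
  have hC : HasDerivAt (fun t => εh * (ℓh t * nh t * α t))
      (0 * (ℓh s * nh s * α s)
        + εh * ((deriv ℓh s * nh s + ℓh s * deriv nh s) * α s + ℓh s * nh s * deriv α s)) s :=
    (hasDerivAt_const s εh).mul ((hℓ.mul hn).mul hα)
  have k10 := key hu hdf₂ hC hu_f₂I
  have y3 : pdot (uf s) (deriv f₂ s)
      = -((α s * deriv nh s - nh s * deriv α s) * (εh * ℓh s)) := by
    simp only [huf_def, pdot_sub_left', pdot_smul_left']
    rw [d2, d3, d4]; ring
  have e3 : pdot (deriv uf s) (f₂ s)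
      = εh * ((deriv ℓh s * nh s + ℓh s * deriv nh s) * α s + ℓh s * nh s * deriv α s)
        + (α s * deriv nh s - nh s * deriv α s) * (εh * ℓh s) := by
    linear_combination k10 - y3
  -- the normalizing factor is differentiable at s
  have hgs : sG α ℓh nh εh s < 0 := hg s hs
  have hGd : DifferentiableAt ℝ (fun t => sG α ℓh nh εh t) s := by
    unfold sG
    exact (((((hαA.mul hdnA).sub (hnA.mul hdαA)).pow 2).const_mul εh)).sub
      ((((hℓA.pow 2)).mul (hnA.pow 2)).mul ((hnA.pow 2).add ((hαA.pow 2).const_mul εh)))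
  have hGneg : ∀ᶠ t in 𝓝 s, sG α ℓh nh εh t < 0 :=
    hGd.continuousAt.eventually (eventually_lt_nhds hgs)
  have hrfe : rf =ᶠ[𝓝 s] fun t => (Real.sqrt (-(sG α ℓh nh εh t)))⁻¹ := by
    filter_upwards [hGneg] with t ht
    simp [hrf_def, abs_of_neg ht]
  have hrd : DifferentiableAt ℝ rf s := by
    refine (hrfe.differentiableAt_iff).mpr ?_
    refine DifferentiableAt.inv (hGd.neg.sqrt (by simp only [Pi.neg_apply]; linarith)) ?_
    exact ne_of_gt (Real.sqrt_pos.mpr (by linarith))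
  have hr : HasDerivAt rf (deriv rf s) s := hrd.hasDerivAt
  have hfun : sEvolute γ f₁ f₂ α ℓh nh εh = fun t => rf t • uf t := by
    funext t; simp [sEvolute, hrf_def, huf_def]
  have hE : HasDerivAt (sEvolute γ f₁ f₂ α ℓh nh εh)
      (rf s • deriv uf s + deriv rf s • uf s) s := by
    rw [hfun]; exact hr.smul hu
  have hEs : sEvolute γ f₁ f₂ α ℓh nh εh s = rf s • uf s := by
    rw [hfun]
  -- abbreviations for pointwise values
  have hu_μs : pdot (uf s) (muOf γ f₁ f₂ s) = 0 := hu_μI s hs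
  have hu_γs : pdot (uf s) (γ s) = -(ℓh s * nh s * nh s) := hu_γI s hs
  have hu_f₂s : pdot (uf s) (f₂ s) = εh * (ℓh s * nh s * α s) := hu_f₂I s hs
  have hlam : α s ^ 2 + εh * nh s ^ 2 ≠ 0 := hnd s hs
  have hlamabs : (0:ℝ) < |α s ^ 2 + εh * nh s ^ 2| := abs_pos.mpr hlam
  have hsqlam : Real.sqrt |α s ^ 2 + εh * nh s ^ 2| * Real.sqrt |α s ^ 2 + εh * nh s ^ 2|
      = |α s ^ 2 + εh * nh s ^ 2| := Real.mul_self_sqrt (abs_nonneg _)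
  have hsqlampos : (0:ℝ) < Real.sqrt |α s ^ 2 + εh * nh s ^ 2| := Real.sqrt_pos.mpr hlamabs
  -- Goal 1 : ⟨E,E⟩ = -1
  have hPu : pdot (uf s) (uf s) = sG α ℓh nh εh s := by
    simp only [huf_def, pdot_sub_left', pdot_sub_right', pdot_smul_left', pdot_smul_right']
    rw [c1, c2, c3, c4, c4', c5, c5', c6, c6']
    simp only [sG]; ring
  have habsg : |sG α ℓh nh εh s| = -sG α ℓh nh εh s := abs_of_neg hgs
  have hsqg : Real.sqrt (-sG α ℓh nh εh s) * Real.sqrt (-sG α ℓh nh εh s)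
      = -sG α ℓh nh εh s := Real.mul_self_sqrt (by linarith)
  have hsqgne : Real.sqrt (-sG α ℓh nh εh s) ≠ 0 :=
    ne_of_gt (Real.sqrt_pos.mpr (by linarith))
  have R1 : pdot (sEvolute γ f₁ f₂ α ℓh nh εh s) (sEvolute γ f₁ f₂ α ℓh nh εh s) = -1 := by
    rw [hEs, pdot_smul_left', pdot_smul_right', hPu, hrf_def]
    simp only [habsg]
    field_simp
    linear_combination hsqg
  -- Goal 2 : ⟨μ,μ⟩ = 1
  have R2 : pdot (muOf γ f₁ f₂ s) (muOf γ f₁ f₂ s) = 1 := by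
    simp only [muOf]
    rw [pdot_triple_self']
    show det3 (pdot (γ s) (γ s)) _ _ _ _ _ _ _ _ = 1
    rw [c1, c2, c3, c4, c5, c6]
    simp only [det3]; linear_combination he2
  -- Goal 3 : ⟨η,η⟩ = -sign λ
  have hηηval : pdot (η s) (η s)
      = (Real.sqrt |α s ^ 2 + εh * nh s ^ 2|)⁻¹ * (Real.sqrt |α s ^ 2 + εh * nh s ^ 2|)⁻¹
        * (-(α s ^ 2 + εh * nh s ^ 2)) := by
    rw [hη s]
    simp only [pdot_smul_left', pdot_smul_right', pdot_add_left', pdot_add_right']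
    rw [c1, c3, c5, c5']
    rcases hfr.eps with h | h <;> rw [h] <;> ring
  have R3 : pdot (η s) (η s) = -Real.sign (α s ^ 2 + εh * nh s ^ 2) := by
    rw [hηηval, ← mul_inv, hsqlam]
    rcases hlam.lt_or_gt with hlt | hlt
    · rw [abs_of_neg hlt, Real.sign_of_neg hlt]
      field_simp
    · rw [abs_of_pos hlt, Real.sign_of_pos hlt]
      field_simp
  -- Goal 4 : ⟨E,μ⟩ = 0
  have R4 : pdot (sEvolute γ f₁ f₂ α ℓh nh εh s) (muOf γ f₁ f₂ s) = 0 := by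
    rw [hEs, pdot_smul_left', hu_μs, mul_zero]
  -- Goal 5 : ⟨E,η⟩ = 0
  have R5 : pdot (sEvolute γ f₁ f₂ α ℓh nh εh s) (η s) = 0 := by
    rw [hEs, hη s]
    simp only [pdot_smul_left', pdot_smul_right', pdot_add_right']
    rw [hu_γs, hu_f₂s]
    rcases hfr.eps with h | h <;> rw [h] <;> ring
  -- Goal 6 : ⟨μ,η⟩ = 0
  have R6 : pdot (muOf γ f₁ f₂ s) (η s) = 0 := by
    rw [hη s]
    simp only [pdot_smul_right', pdot_add_right']
    rw [c7, c9]; ring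
  -- Goal 7 : ⟨E',μ⟩ = 0
  have R7 : pdot (deriv (sEvolute γ f₁ f₂ α ℓh nh εh) s) (muOf γ f₁ f₂ s) = 0 := by
    rw [hE.deriv]
    simp only [pdot_add_left', pdot_smul_left']
    rw [hu_μs, e1]; ring
  -- Goal 8 : ⟨E',η⟩ = 0
  have R8 : pdot (deriv (sEvolute γ f₁ f₂ α ℓh nh εh) s) (η s) = 0 := by
    rw [hE.deriv, hη s]
    simp only [pdot_add_left', pdot_smul_left', pdot_smul_right', pdot_add_right']
    rw [hu_γs, hu_f₂s, e2, e3]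
    rcases hfr.eps with h | h <;> rw [h] <;> ring
  -- Goal 9 : ⟨μ',η⟩
  have d5' : pdot (deriv (muOf γ f₁ f₂) s) (γ s) = -α s := by
    rw [pdot_comm']; exact d5
  have d7' : pdot (deriv (muOf γ f₁ f₂) s) (f₂ s) = -nh s := by
    rw [pdot_comm']; exact d7
  have R9 : pdot (deriv (muOf γ f₁ f₂) s) (η s)
      = -(α s ^ 2 + εh * nh s ^ 2) / Real.sqrt |α s ^ 2 + εh * nh s ^ 2| := by
    rw [hη s]
    simp only [pdot_smul_right', pdot_add_right']
    rw [d5', d7', div_eq_mul_inv]; ring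
  -- Goal 10 : immersion
  have R10 : ¬(deriv (sEvolute γ f₁ f₂ α ℓh nh εh) s = 0 ∧
      deriv (muOf γ f₁ f₂) s = 0 ∧ deriv η s = 0) := by
    rintro ⟨-, h2, -⟩
    rw [h2, pdot_zero_left'] at R9
    exact (div_ne_zero (neg_ne_zero.mpr hlam) (ne_of_gt hsqlampos)) R9.symm
  exact ⟨R1, R2, R3, R4, R5, R6, R7, R8, R9, R10⟩
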